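/- Let p ≥ 1, let C be a real symmetric positive definite p × p matrix, and let 𝓜 denote the set of real symmetric positive definite p × p matrices Σ whose inverse Σ⁻¹ is tridiagonal. Let M be the Markov transform of C. Then M ∈ 𝓜 and M is the unique minimizer over 𝓜 of the function Σ ↦ trace(Σ⁻¹ C) + log det Σ (this objective equals, up to an additive constant depending only on C and p, twice the Kullback–Leibler divergence KL(N(0,C), N(0,Σ)) between the corresponding centered Gaussian distributions). -/

import Mathlib

/-- The regression coefficient `β_{l+1} = C_{l,l+1} / C_{l,l}` of a matrix `C`
(0-based indices), with junk value `0` when out of range. -/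
noncomputable def regressionStep {p : ℕ} (C : Matrix (Fin p) (Fin p) ℝ) (l : ℕ) : ℝ :=
  if h : l + 1 < p then
    C ⟨l, Nat.lt_of_succ_lt h⟩ ⟨l + 1, h⟩ / C ⟨l, Nat.lt_of_succ_lt h⟩ ⟨l, Nat.lt_of_succ_lt h⟩
  else 0

/-- The **Markov transform** of a matrix `C`: the symmetric matrix `M` with
`M_{j,k} = C_{j,j} ∏_{l=j}^{k−1} β_{l+1}` for `j ≤ k` (empty product `= 1`). -/
noncomputable def markovTransform {p : ℕ} (C : Matrix (Fin p) (Fin p) ℝ) :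
    Matrix (Fin p) (Fin p) ℝ :=
  Matrix.of fun j k =>
    if (j : ℕ) ≤ (k : ℕ) then C j j * ∏ l ∈ Finset.Ico (j : ℕ) (k : ℕ), regressionStep C l
    else C k k * ∏ l ∈ Finset.Ico (k : ℕ) (j : ℕ), regressionStep C l


/-!
Let `B` be the unit lower bidiagonal matrix whose `j`-th row computes the innovation
`x_j - β_j x_{j-1}`. Below the diagonal `M_{j,k} = β_j M_{j-1,k}`, so `B M` is upper triangular
and the symmetric matrix `B M Bᵀ` is diagonal; hence `M⁻¹ = Bᵀ (B M Bᵀ)⁻¹ B` is tridiagonal. A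
diagonal entry of `B M Bᵀ` only involves the tridiagonal band of `M`, on which `M` agrees with `C`,
so it equals the corresponding entry of the positive definite matrix `B C Bᵀ`; thus `M` is positive
definite.

For tridiagonal `Σ⁻¹` the same band agreement gives `tr(Σ⁻¹ C) = tr(Σ⁻¹ M)`, so the objective
becomes `tr(Σ⁻¹ M) + log det Σ`, which equals `p + log det M` at `Σ = M`. Writing `M = Qᴴ Q` and
`A = Q Σ⁻¹ Qᴴ`, the excess is `tr A - log det A - p = ∑ (λ - 1 - log λ)` over the eigenvalues `λ`
of `A`, which is positive unless `A = 1`, i.e. `Σ = M`.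
-/

open Finset

namespace Matrix

section Band

variable {R : Type*} {p : ℕ}

def IsTridiagonal [Zero R] (T : Matrix (Fin p) (Fin p) R) : Prop :=
  ∀ j k : Fin p, 2 ≤ |(j : ℤ) - (k : ℤ)| → T j k = 0

def EqOnTridiagonalBand (X Y : Matrix (Fin p) (Fin p) R) : Prop :=
  ∀ j k : Fin p, |(j : ℤ) - (k : ℤ)| ≤ 1 → X j k = Y j k

def IsLowerBidiagonal [Zero R] (B : Matrix (Fin p) (Fin p) R) : Prop :=
  ∀ i a : Fin p, B i a ≠ 0 → (a : ℕ) = i ∨ (a : ℕ) + 1 = i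

theorem IsLowerBidiagonal.apply_eq_zero_of_lt [Zero R] {B : Matrix (Fin p) (Fin p) R}
    (hB : B.IsLowerBidiagonal) {i a : Fin p} (h : i < a) : B i a = 0 := by
  by_contra hne
  have := hB i a hne
  omega

theorem IsLowerBidiagonal.isLowerTriangular [Zero R] {B : Matrix (Fin p) (Fin p) R}
    (hB : B.IsLowerBidiagonal) : B.IsLowerTriangular :=
  fun _ _ h => hB.apply_eq_zero_of_lt h

theorem IsLowerBidiagonal.isUpperTriangular_transpose [Zero R] {B : Matrix (Fin p) (Fin p) R}
    (hB : B.IsLowerBidiagonal) : Bᵀ.IsUpperTriangular :=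
  fun _ _ h => hB.apply_eq_zero_of_lt h

variable [NonUnitalNonAssocSemiring R]

theorem IsTridiagonal.trace_mul_eq {T X Y : Matrix (Fin p) (Fin p) R} (hT : T.IsTridiagonal)
    (hXY : EqOnTridiagonalBand X Y) : (T * X).trace = (T * Y).trace := by
  show ∑ i, ∑ k, T i k * X k i = ∑ i, ∑ k, T i k * Y k i
  refine sum_congr rfl fun i _ => sum_congr rfl fun k _ => ?_
  by_cases hik : 2 ≤ |(i : ℤ) - (k : ℤ)|
  · rw [hT i k hik, zero_mul, zero_mul]
  · rw [hXY k i (by rw [abs_sub_comm]; exact Int.lt_add_one_iff.mp (not_le.mp hik))]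

theorem IsLowerBidiagonal.mul_mul_transpose_apply_self {B X Y : Matrix (Fin p) (Fin p) R}
    (hB : B.IsLowerBidiagonal) (hXY : EqOnTridiagonalBand X Y) (i : Fin p) :
    (B * X * Bᵀ) i i = (B * Y * Bᵀ) i i := by
  simp only [mul_apply, transpose_apply, sum_mul]
  refine sum_congr rfl fun b _ => sum_congr rfl fun a _ => ?_
  by_cases ha : B i a = 0
  · rw [ha, zero_mul, zero_mul, zero_mul, zero_mul]
  by_cases hb : B i b = 0
  · rw [hb, mul_zero, mul_zero]
  have := hB i a ha
  have := hB i b hb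
  rw [hXY a b (abs_le.mpr ⟨by omega, by omega⟩)]

theorem IsLowerBidiagonal.isTridiagonal_transpose_mul_diagonal_mul
    {B : Matrix (Fin p) (Fin p) R} (hB : B.IsLowerBidiagonal) (d : Fin p → R) :
    (Bᵀ * diagonal d * B).IsTridiagonal := by
  intro j k hjk
  rw [mul_apply]
  refine sum_eq_zero fun m _ => ?_
  rw [mul_diagonal, transpose_apply]
  by_cases hj : B m j = 0
  · rw [hj, zero_mul, zero_mul]
  by_cases hk : B m k = 0
  · rw [hk, mul_zero]
  have := hB m j hj
  have := hB m k hk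
  rcases le_abs'.mp hjk with h | h <;> omega

end Band

theorem IsSymm.isDiag_of_isUpperTriangular {n R : Type*} [LinearOrder n] [Zero R]
    {A : Matrix n n R} (hA : A.IsSymm) (hU : A.IsUpperTriangular) : A.IsDiag := by
  intro i j hij
  rcases hij.lt_or_gt with h | h
  · rw [← hA.apply i j, hU h]
  · exact hU h

end Matrix

namespace Matrix.PosDef

variable {n : Type*} [Fintype n] [DecidableEq n]

theorem card_add_log_det_lt_trace {A : Matrix n n ℝ} (hA : A.PosDef) (hA1 : A ≠ 1) :
    Fintype.card n + Real.log A.det < A.trace := by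
  set μ := hA.isHermitian.eigenvalues
  have hμ : ∀ i, 0 < μ i := hA.eigenvalues_pos
  obtain ⟨i₀, hi₀⟩ : ∃ i, μ i ≠ 1 := by
    by_contra! h
    refine hA1 ?_
    rw [hA.isHermitian.spectral_theorem, show RCLike.ofReal ∘ μ = 1 from funext fun i => by
      simp [h i], Pi.one_def, diagonal_one, map_one]
  rw [hA.isHermitian.trace_eq_sum_eigenvalues, hA.isHermitian.det_eq_prod_eigenvalues]
  simp only [RCLike.ofReal_real_eq_id, id_eq]
  rw [Real.log_prod fun i _ => (hμ i).ne', Fintype.card_eq_sum_ones, Nat.cast_sum, Nat.cast_one,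
    ← sum_add_distrib]
  refine sum_lt_sum (fun i _ => ?_) ⟨i₀, mem_univ _, ?_⟩
  · linarith [Real.log_le_sub_one_of_pos (hμ i)]
  · linarith [Real.log_lt_sub_one_of_pos (hμ i₀) hi₀]

open scoped MatrixOrder in
theorem card_add_log_det_lt_trace_inv_mul_add_log_det {M S : Matrix n n ℝ} (hM : M.PosDef)
    (hS : S.PosDef) (hne : S ≠ M) :
    Fintype.card n + Real.log M.det < (S⁻¹ * M).trace + Real.log S.det := by
  obtain ⟨Q, rfl⟩ := CStarAlgebra.nonneg_iff_eq_star_mul_self.mp hM.posSemidef.nonneg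
  have hQ : IsUnit Q.det := isUnit_of_mul_isUnit_right <| by
    rw [← det_mul]; exact (isUnit_iff_isUnit_det _).mp hM.isUnit
  have hA : (Q * S⁻¹ * star Q).PosDef :=
    (IsUnit.posDef_star_right_conjugate_iff ((isUnit_iff_isUnit_det _).mpr hQ)).mpr hS.inv
  have hA1 : Q * S⁻¹ * star Q ≠ 1 := fun h => hne <| by
    have h' : S⁻¹ * (star Q * Q) = 1 := calc
      S⁻¹ * (star Q * Q) = Q⁻¹ * (Q * S⁻¹ * star Q) * Q := by
        simp only [Matrix.mul_assoc, nonsing_inv_mul_cancel_left _ _ hQ]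
      _ = 1 := by rw [h, Matrix.mul_one, nonsing_inv_mul _ hQ]
    rw [← inv_eq_right_inv h', nonsing_inv_nonsing_inv _ ((isUnit_iff_isUnit_det _).mp hS.isUnit)]
  have htr : (Q * S⁻¹ * star Q).trace = (S⁻¹ * (star Q * Q)).trace := by
    rw [trace_mul_cycle, trace_mul_comm]
  have hdet : Real.log (Q * S⁻¹ * star Q).det = Real.log (star Q * Q).det - Real.log S.det := by
    rw [← Real.log_div hM.det_pos.ne' hS.det_pos.ne', det_mul, det_mul, det_mul, det_nonsing_inv,
      Ring.inverse_eq_inv', div_eq_mul_inv]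
    ring_nf
  linarith [hA.card_add_log_det_lt_trace hA1]

end Matrix.PosDef

open Matrix

section MarkovTransform

variable {p : ℕ} (C : Matrix (Fin p) (Fin p) ℝ)

theorem markovTransform_apply_comm (j k : Fin p) :
    markovTransform C j k = markovTransform C k j := by
  simp only [markovTransform, of_apply]
  rcases lt_trichotomy (j : ℕ) k with h | h | h
  · rw [if_pos h.le, if_neg (not_le.mpr h)]
  · rw [Fin.ext h]
  · rw [if_neg (not_le.mpr h), if_pos h.le]

theorem isSymm_markovTransform : (markovTransform C).IsSymm :=
  IsSymm.ext fun j k => markovTransform_apply_comm C k j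

theorem markovTransform_apply_self (j : Fin p) : markovTransform C j j = C j j := by
  simp [markovTransform]

theorem markovTransform_apply_succ_right {j k k' : Fin p} (hjk : (j : ℕ) ≤ k)
    (hk' : (k' : ℕ) = k + 1) :
    markovTransform C j k' = markovTransform C j k * regressionStep C k := by
  simp only [markovTransform, of_apply]
  rw [if_pos hjk, if_pos (by omega), hk', prod_Ico_succ_top hjk, mul_assoc]

theorem regressionStep_eq_div {k k' : Fin p} (hk' : (k' : ℕ) = k + 1) :
    regressionStep C k = C k k' / C k k := by
  have h : (k : ℕ) + 1 < p := hk' ▸ k'.isLt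
  obtain rfl : k' = ⟨k + 1, h⟩ := Fin.ext hk'
  rw [regressionStep, dif_pos h]

theorem markovTransform_apply_self_succ {k k' : Fin p} (hk : C k k ≠ 0) (hk' : (k' : ℕ) = k + 1) :
    markovTransform C k k' = C k k' := by
  rw [markovTransform_apply_succ_right C le_rfl hk', markovTransform_apply_self,
    regressionStep_eq_div C hk', mul_div_cancel₀ _ hk]

theorem eqOnTridiagonalBand_markovTransform (hC : C.IsSymm) (hdiag : ∀ j, C j j ≠ 0) :
    EqOnTridiagonalBand (markovTransform C) C := by
  intro j k hjk
  rcases abs_le.mp hjk with ⟨h₁, h₂⟩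
  rcases (show (k : ℕ) = j + 1 ∨ j = k ∨ (j : ℕ) = k + 1 by omega) with h | h | h
  · exact markovTransform_apply_self_succ C (hdiag j) h
  · rw [h, markovTransform_apply_self]
  · rw [markovTransform_apply_comm, markovTransform_apply_self_succ C (hdiag k) h, hC.apply]

theorem Matrix.PosDef.eqOnTridiagonalBand_markovTransform (hC : C.PosDef) :
    EqOnTridiagonalBand (markovTransform C) C :=
  _root_.eqOnTridiagonalBand_markovTransform C (isHermitian_iff_isSymm.mp hC.isHermitian)
    fun _ => hC.diag_pos.ne'

noncomputable def innovationMatrix : Matrix (Fin p) (Fin p) ℝ :=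
  of fun i a => if i = a then 1 else if (a : ℕ) + 1 = i then -regressionStep C a else 0

theorem isLowerBidiagonal_innovationMatrix : (innovationMatrix C).IsLowerBidiagonal := by
  intro i a h
  simp only [innovationMatrix, of_apply] at h
  split_ifs at h with h₁ h₂
  · exact .inl (congrArg Fin.val h₁.symm)
  · exact .inr h₂
  · exact absurd rfl h

theorem det_innovationMatrix : (innovationMatrix C).det = 1 := by
  rw [det_of_isLowerTriangular _ (isLowerBidiagonal_innovationMatrix C).isLowerTriangular]
  simp [innovationMatrix]

theorem innovationMatrix_mul_apply_succ {a i : Fin p} (hi : (i : ℕ) = a + 1)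
    (X : Matrix (Fin p) (Fin p) ℝ) (n : Fin p) :
    (innovationMatrix C * X) i n = X i n - regressionStep C a * X a n := by
  have hia : i ≠ a := fun h => by rw [h] at hi; omega
  rw [mul_apply, sum_eq_add i a hia (fun m _ hm => ?_) (by simp) (by simp)]
  · simp [innovationMatrix, hia, hi, sub_eq_add_neg]
  · simp only [innovationMatrix, of_apply, if_neg (Ne.symm hm.1)]
    rw [if_neg (fun h => hm.2 (Fin.ext (by omega))), zero_mul]

theorem isUpperTriangular_innovationMatrix_mul_markovTransform :
    (innovationMatrix C * markovTransform C).IsUpperTriangular := by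
  intro i n (h : n < i)
  obtain ⟨a, hi⟩ : ∃ a : Fin p, (i : ℕ) = a + 1 := ⟨⟨i - 1, by omega⟩, by simp; omega⟩
  rw [innovationMatrix_mul_apply_succ C hi, markovTransform_apply_comm C i,
    markovTransform_apply_succ_right C (by omega) hi, markovTransform_apply_comm C n]
  ring

theorem isDiag_innovationMatrix_mul_markovTransform_mul_transpose :
    (innovationMatrix C * markovTransform C * (innovationMatrix C)ᵀ).IsDiag := by
  refine IsSymm.isDiag_of_isUpperTriangular ?_ <|
    (isUpperTriangular_innovationMatrix_mul_markovTransform C).mul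
      (isLowerBidiagonal_innovationMatrix C).isUpperTriangular_transpose
  simp only [IsSymm, transpose_mul, transpose_transpose, (isSymm_markovTransform C).eq, mul_assoc]

theorem isUnit_innovationMatrix : IsUnit (innovationMatrix C) :=
  (isUnit_iff_isUnit_det _).mpr (by rw [det_innovationMatrix]; exact isUnit_one)

theorem posDef_markovTransform (hC : C.PosDef) : (markovTransform C).PosDef := by
  set B := innovationMatrix C
  have hconj (X : Matrix (Fin p) (Fin p) ℝ) : (B * X * Bᵀ).PosDef ↔ X.PosDef := by
    simpa [star_eq_conjTranspose] using (isUnit_innovationMatrix C).posDef_star_right_conjugate_iff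
  rw [← hconj, ← (isDiag_innovationMatrix_mul_markovTransform_mul_transpose C).diagonal_diag,
    posDef_diagonal_iff]
  intro j
  rw [diag_apply, (isLowerBidiagonal_innovationMatrix C).mul_mul_transpose_apply_self
    (hC.eqOnTridiagonalBand_markovTransform C)]
  exact ((hconj C).mpr hC).diag_pos

theorem isTridiagonal_inv_markovTransform : (markovTransform C)⁻¹.IsTridiagonal := by
  set B := innovationMatrix C
  have hB : IsUnit B.det := (isUnit_iff_isUnit_det _).mp (isUnit_innovationMatrix C)
  have hBt : IsUnit Bᵀ.det := by rwa [det_transpose]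
  have hinv : (markovTransform C)⁻¹ = Bᵀ * (B * markovTransform C * Bᵀ)⁻¹ * B := by
    rw [Matrix.mul_inv_rev, Matrix.mul_inv_rev, mul_assoc, mul_assoc,
      mul_nonsing_inv_cancel_left _ _ hBt, nonsing_inv_mul_cancel_right _ _ hB]
  rw [hinv, ← (isDiag_innovationMatrix_mul_markovTransform_mul_transpose C).diagonal_diag,
    inv_diagonal]
  exact (isLowerBidiagonal_innovationMatrix C).isTridiagonal_transpose_mul_diagonal_mul _

end MarkovTransform

theorem markovTransform_unique_KL_minimizer_general
    (p : ℕ) (C : Matrix (Fin p) (Fin p) ℝ) (hpd : C.PosDef) :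
    markovTransform C ∈
        {S : Matrix (Fin p) (Fin p) ℝ | S.PosDef ∧
          ∀ j k : Fin p, 2 ≤ |(j : ℤ) - (k : ℤ)| → S⁻¹ j k = 0} ∧
      ∀ S : Matrix (Fin p) (Fin p) ℝ,
        S ∈ {S : Matrix (Fin p) (Fin p) ℝ | S.PosDef ∧
              ∀ j k : Fin p, 2 ≤ |(j : ℤ) - (k : ℤ)| → S⁻¹ j k = 0} →
        S ≠ markovTransform C →
          ((markovTransform C)⁻¹ * C).trace + Real.log (markovTransform C).det <
            (S⁻¹ * C).trace + Real.log S.det := by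
  have hM := posDef_markovTransform C hpd
  have hMinv := isTridiagonal_inv_markovTransform C
  have hband := hpd.eqOnTridiagonalBand_markovTransform C
  refine ⟨⟨hM, hMinv⟩, fun S ⟨hS, hSinv⟩ hne => ?_⟩
  rw [← IsTridiagonal.trace_mul_eq hSinv hband, ← hMinv.trace_mul_eq hband,
    nonsing_inv_mul _ ((isUnit_iff_isUnit_det _).mp hM.isUnit), trace_one]
  exact hM.card_add_log_det_lt_trace_inv_mul_add_log_det hS hne

/-- **The Markov transform is the information projection onto Markov covariances.**
For a real symmetric positive definite matrix `C`, the Markov transform `M` of `C` belongs to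
the class `𝓜` of symmetric positive definite matrices with tridiagonal inverse, and it is the
unique minimizer over `𝓜` of `Σ ↦ trace(Σ⁻¹ C) + log det Σ`, which equals (up to an additive
constant depending only on `C` and `p`) twice the KL divergence `KL(N(0,C), N(0,Σ))`. -/
theorem markovTransform_unique_KL_minimizer
    (p : ℕ) (hp : 1 ≤ p) (C : Matrix (Fin p) (Fin p) ℝ) (hpd : C.PosDef) :
    markovTransform C ∈
        {S : Matrix (Fin p) (Fin p) ℝ | S.PosDef ∧
          ∀ j k : Fin p, 2 ≤ |(j : ℤ) - (k : ℤ)| → S⁻¹ j k = 0} ∧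
      ∀ S : Matrix (Fin p) (Fin p) ℝ,
        S ∈ {S : Matrix (Fin p) (Fin p) ℝ | S.PosDef ∧
              ∀ j k : Fin p, 2 ≤ |(j : ℤ) - (k : ℤ)| → S⁻¹ j k = 0} →
        S ≠ markovTransform C →
          ((markovTransform C)⁻¹ * C).trace + Real.log (markovTransform C).det <
            (S⁻¹ * C).trace + Real.log S.det :=
  markovTransform_unique_KL_minimizer_general p C hpd
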